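/- Every cycle, i.e., every multigraph whose underlying simple graph is a cycle and all of whose multiedges have multiplicity 1, is Mengerian for time. -/

import Mathlib

/-- A (finite, loopless) multigraph: a vertex type, an edge type, and an
endpoints function assigning to each edge an unordered pair of distinct vertices. -/
structure Multigraph where
  V : Type
  E : Type
  fintypeV : Fintype V
  decEqV : DecidableEq V
  fintypeE : Fintype E
  decEqE : DecidableEq E
  ends : E → Sym2 V
  loopless : ∀ e, ¬ (ends e).IsDiag

attribute [instance] Multigraph.fintypeV Multigraph.decEqV Multigraph.fintypeE Multigraph.decEqE

/-- A temporal `s,z`-path in the temporal graph `(G, lam)`: an alternating sequence of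
pairwise distinct vertices and edges, starting at `s`, ending at `z`, whose edges appear
at non-decreasing timesteps. -/
structure TPath (G : Multigraph) (lam : G.E → ℕ) (s z : G.V) where
  verts : List G.V
  edges : List G.E
  len_eq : verts.length = edges.length + 1
  head_eq : verts.head? = some s
  last_eq : verts.getLast? = some z
  nodup : verts.Nodup
  ends_eq : ∀ (i : ℕ) (h : i < edges.length),
      G.ends (edges.get ⟨i, h⟩) = s(verts.get ⟨i, by omega⟩, verts.get ⟨i + 1, by omega⟩)
  mono : List.Chain' (· ≤ ·) (edges.map lam)

/-- The set of timesteps at which a temporal path is active. -/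
def TPath.times {G : Multigraph} {lam : G.E → ℕ} {s z : G.V} (P : TPath G lam s z) : Set ℕ :=
  {t | ∃ e ∈ P.edges, lam e = t}

/-- Two temporal `s,z`-paths are snapshot disjoint if they are not both active at any
common timestep. -/
def SnapDisjoint {G : Multigraph} {lam : G.E → ℕ} {s z : G.V} (P Q : TPath G lam s z) : Prop :=
  P.times ∩ Q.times = ∅

/-- A set `S` of timesteps is a snapshot `s,z`-cut if every temporal `s,z`-path uses an
edge active at some timestep in `S`. -/
def IsSnapCut (G : Multigraph) (lam : G.E → ℕ) (s z : G.V) (S : Set ℕ) : Prop :=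
  ∀ P : TPath G lam s z, ∃ e ∈ P.edges, lam e ∈ S

/-- `maxD G lam s z`: the maximum number of pairwise snapshot disjoint temporal `s,z`-paths. -/
noncomputable def maxD (G : Multigraph) (lam : G.E → ℕ) (s z : G.V) : ℕ :=
  sSup {k | ∃ f : Fin k → TPath G lam s z, ∀ i j, i ≠ j → SnapDisjoint (f i) (f j)}

/-- `minC G lam s z`: the minimum size of a snapshot `s,z`-cut. -/
noncomputable def minC (G : Multigraph) (lam : G.E → ℕ) (s z : G.V) : ℕ :=
  sInf {h | ∃ S : Finset ℕ, S.card = h ∧ IsSnapCut G lam s z ↑S}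

/-- A proper timefunction: each edge is active at a positive timestep, and no two parallel
edges are active at the same timestep. -/
def ProperTime (G : Multigraph) (lam : G.E → ℕ) : Prop :=
  (∀ e, 0 < lam e) ∧ ∀ e f, e ≠ f → G.ends e = G.ends f → lam e ≠ lam f

/-- `G` is Mengerian for time: for every proper timefunction and every pair of distinct
vertices, the maximum number of pairwise snapshot disjoint temporal `s,z`-paths equals the
minimum size of a snapshot `s,z`-cut. -/
def Mengerian (G : Multigraph) : Prop :=
  ∀ lam : G.E → ℕ, ProperTime G lam → ∀ s z : G.V, s ≠ z →
    maxD G lam s z = minC G lam s z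

/-- `H` is a subgraph of `G` (up to isomorphism): `H` embeds into `G`. -/
def IsSubgraph (H G : Multigraph) : Prop :=
  ∃ (fv : H.V → G.V) (fe : H.E → G.E),
    Function.Injective fv ∧ Function.Injective fe ∧
    ∀ e, G.ends (fe e) = (H.ends e).map fv

/-- The m-subdivision of the multiedge `xy` of `G`: delete all edges between `x` and `y`,
add a new vertex (`none`), and join it to each of `x` and `y` by as many parallel edges as
there were between `x` and `y`. -/
def Multigraph.msubdiv (G : Multigraph) (x y : G.V) : Multigraph where
  V := Option G.V
  E := {e : G.E // G.ends e ≠ s(x, y)} ⊕ ({e : G.E // G.ends e = s(x, y)} × Bool)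
  fintypeV := inferInstance
  decEqV := inferInstance
  fintypeE := inferInstance
  decEqE := inferInstance
  ends := fun t =>
    match t with
    | .inl e => (G.ends e.1).map some
    | .inr (_, true) => s(some x, (none : Option G.V))
    | .inr (_, false) => s((none : Option G.V), some y)
  loopless := by
    rintro (⟨e, he⟩ | ⟨e, b⟩)
    · simpa [Sym2.isDiag_map (Option.some_injective _)] using G.loopless e
    · cases b <;> simp [Sym2.mk_isDiag_iff]

/-- Isomorphism of multigraphs. -/
def MIso (G H : Multigraph) : Prop :=
  ∃ (fv : G.V ≃ H.V) (fe : G.E ≃ H.E), ∀ e, H.ends (fe e) = (G.ends e).map fv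

/-- `B` is obtained from `A` by m-subdividing one of its multiedges. -/
def SubdivStep (A B : Multigraph) : Prop :=
  ∃ x y : A.V, (∃ e, A.ends e = s(x, y)) ∧ MIso (A.msubdiv x y) B

/-- `H` is an m-topological minor of `G`: some subgraph of `G` can be obtained from `H` by
a sequence of m-subdivisions. -/
def IsMTopMinor (H G : Multigraph) : Prop :=
  ∃ K, Relation.ReflTransGen SubdivStep H K ∧ IsSubgraph K G

/-- The multigraph obtained from `G` by keeping only the edges satisfying `P`. -/
def Multigraph.restrictE (G : Multigraph) (P : G.E → Prop) [DecidablePred P] : Multigraph where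
  V := G.V
  E := {e : G.E // P e}
  fintypeV := G.fintypeV
  decEqV := G.decEqV
  fintypeE := inferInstance
  decEqE := inferInstance
  ends := fun e => G.ends e.1
  loopless := fun e => G.loopless e.1

/-- The underlying simple graph of a multigraph. -/
def Multigraph.simple (G : Multigraph) : SimpleGraph G.V where
  Adj u v := ∃ e, G.ends e = s(u, v)
  symm := ⟨by
    rintro u v ⟨e, he⟩
    exact ⟨e, by rw [he, Sym2.eq_swap]⟩⟩
  loopless := ⟨by
    rintro u ⟨e, he⟩
    exact G.loopless e (by rw [he]; exact Sym2.mk_isDiag_iff.2 rfl)⟩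



/-!
In a graph of maximum degree two a path is determined by its first two vertices and its
endpoint, and when no edge is parallel to another its edges are determined by its vertices.
Hence every temporal `s,z`-path in a cycle uses the same timesteps as the path leaving `s`
towards one of its two neighbours, so there are at most two sets of timesteps `T₁, T₂` of
temporal `s,z`-paths. If they are disjoint, two paths are snapshot disjoint and one timestep
from each set is a cut; otherwise one path exists and a common timestep is a cut. The
inequality `maxD ≤ minC` holds in every temporal graph: a cut meets pairwise snapshot disjoint
paths at pairwise distinct timesteps.
-/

namespace SimpleGraph

variable {V W : Type*}

def MaxDegreeLeTwo (G : SimpleGraph V) : Prop :=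
  ∀ v a b c, G.Adj v a → G.Adj v b → G.Adj v c → a = b ∨ a = c ∨ b = c

theorem maxDegreeLeTwo_cycleGraph (n : ℕ) : (cycleGraph n).MaxDegreeLeTwo := by
  intro v a b c ha hb hc
  obtain _ | _ | n := n
  · exact v.elim0
  · exact (cycleGraph_one_adj ha).elim
  · rw [← mem_neighborSet, cycleGraph_neighborSet] at ha hb hc
    simp only [Set.mem_insert_iff, Set.mem_singleton_iff] at ha hb hc
    grind

theorem MaxDegreeLeTwo.of_embedding {G : SimpleGraph V} {H : SimpleGraph W} (f : G ↪g H)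
    (hH : H.MaxDegreeLeTwo) : G.MaxDegreeLeTwo := by
  intro v a b c ha hb hc
  simpa only [f.injective.eq_iff] using
    hH (f v) (f a) (f b) (f c) (f.map_adj_iff.2 ha) (f.map_adj_iff.2 hb) (f.map_adj_iff.2 hc)

theorem MaxDegreeLeTwo.eq_of_isChain {G : SimpleGraph V} (hG : G.MaxDegreeLeTwo) :
    ∀ {a b : V} {l m : List V}, (a :: b :: l).IsChain G.Adj → (a :: b :: m).IsChain G.Adj →
      (a :: b :: l).Nodup → (a :: b :: m).Nodup →
      (b :: l).getLast (List.cons_ne_nil _ _) = (b :: m).getLast (List.cons_ne_nil _ _) →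
      l = m
  | _, _, [], [], _, _, _, _, _ => rfl
  | _, b, [], c :: m, _, _, _, hmn, hlast => by
    have := List.getLast_mem (List.cons_ne_nil c m)
    rw [List.getLast_cons_cons, List.getLast_singleton] at hlast
    rw [← hlast] at this
    simp_all
  | _, b, c :: l, [], _, _, hln, _, hlast => by
    have := List.getLast_mem (List.cons_ne_nil c l)
    rw [List.getLast_cons_cons, List.getLast_singleton] at hlast
    rw [hlast] at this
    simp_all
  | a, b, c :: l, d :: m, hl, hm, hln, hmn, hlast => by
    rw [List.isChain_cons_cons] at hl hm
    have hcd : c = d := by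
      rcases hG b a c d hl.1.symm (List.isChain_cons_cons.1 hl.2).1
        (List.isChain_cons_cons.1 hm.2).1 with h | h | h
      · simp_all
      · simp_all
      · exact h
    subst hcd
    rw [hG.eq_of_isChain hl.2 hm.2 hln.of_cons hmn.of_cons (by simpa using hlast)]

end SimpleGraph

namespace TPath

variable {G : Multigraph} {lam : G.E → ℕ} {s z : G.V}

theorem edges_ne_nil (hsz : s ≠ z) (P : TPath G lam s z) : P.edges ≠ [] := by
  intro h
  have hlen := P.len_eq
  rw [h, List.length_nil, zero_add, List.length_eq_one_iff] at hlen
  obtain ⟨v, hv⟩ := hlen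
  have hs := P.head_eq
  have hz := P.last_eq
  simp only [hv, List.head?_cons, List.getLast?_singleton, Option.some.injEq] at hs hz
  exact hsz (hs.symm.trans hz)

theorem times_nonempty (hsz : s ≠ z) (P : TPath G lam s z) : P.times.Nonempty :=
  let ⟨e, he⟩ := List.exists_mem_of_ne_nil _ (P.edges_ne_nil hsz)
  ⟨lam e, e, he, rfl⟩

theorem isChain_verts (P : TPath G lam s z) : P.verts.IsChain G.simple.Adj :=
  List.isChain_iff_getElem.2 fun i hi => ⟨_, P.ends_eq i (by have := P.len_eq; omega)⟩

theorem exists_verts_eq_cons_cons (hsz : s ≠ z) (P : TPath G lam s z) :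
    ∃ b l, P.verts = s :: b :: l := by
  have hlen := P.len_eq
  have hne := P.edges_ne_nil hsz
  have hs := P.head_eq
  match P.verts, hlen, hs with
  | s' :: b :: l, _, hs => exact ⟨b, l, by simpa using hs⟩
  | [_], hlen, _ => simp_all
  | [], hlen, _ => simp at hlen

theorem exists_adj_getElem?_one (hsz : s ≠ z) (P : TPath G lam s z) :
    ∃ b, P.verts[1]? = some b ∧ G.simple.Adj s b := by
  obtain ⟨b, l, hP⟩ := P.exists_verts_eq_cons_cons hsz
  have hc := P.isChain_verts
  rw [hP, List.isChain_cons_cons] at hc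
  exact ⟨b, by simp [hP], hc.1⟩

theorem verts_eq_of_getElem?_one_eq (hG : G.simple.MaxDegreeLeTwo) (hsz : s ≠ z)
    {P Q : TPath G lam s z} (h : P.verts[1]? = Q.verts[1]?) : P.verts = Q.verts := by
  obtain ⟨b, l, hP⟩ := P.exists_verts_eq_cons_cons hsz
  obtain ⟨b', m, hQ⟩ := Q.exists_verts_eq_cons_cons hsz
  have hPc := P.isChain_verts
  have hQc := Q.isChain_verts
  have hPn := P.nodup
  have hQn := Q.nodup
  have hPz := P.last_eq
  have hQz := Q.last_eq
  rw [hP] at h hPc hPn hPz ⊢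
  rw [hQ] at h hQc hQn hQz ⊢
  obtain rfl : b = b' := by simpa using h
  rw [hG.eq_of_isChain hPc hQc hPn hQn (Option.some_injective _ ?_)]
  simpa [← List.getLast?_eq_some_getLast] using hPz.trans hQz.symm

theorem edges_eq_of_verts_eq (hG : Function.Injective G.ends) {P Q : TPath G lam s z}
    (h : P.verts = Q.verts) : P.edges = Q.edges := by
  have hlen : P.edges.length = Q.edges.length := by
    have := P.len_eq; have := Q.len_eq; have := congrArg List.length h; omega
  refine List.ext_get hlen fun i hP hQ => hG ?_
  rw [P.ends_eq i hP, Q.ends_eq i hQ]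
  simp only [List.get_eq_getElem, h]

theorem exists_forall_times_eq_or_eq (hends : Function.Injective G.ends)
    (hG : G.simple.MaxDegreeLeTwo) (hsz : s ≠ z) (P : TPath G lam s z) :
    ∃ Q : TPath G lam s z, ∀ R : TPath G lam s z, R.times = P.times ∨ R.times = Q.times := by
  have times_eq {R R' : TPath G lam s z} (h : R.verts[1]? = R'.verts[1]?) :
      R.times = R'.times := by
    rw [TPath.times, TPath.times,
      edges_eq_of_verts_eq hends (verts_eq_of_getElem?_one_eq hG hsz h)]
  by_cases hQ : ∃ Q : TPath G lam s z, Q.verts[1]? ≠ P.verts[1]?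
  · obtain ⟨Q, hQP⟩ := hQ
    refine ⟨Q, fun R => ?_⟩
    obtain ⟨a, ha, hsa⟩ := P.exists_adj_getElem?_one hsz
    obtain ⟨b, hb, hsb⟩ := Q.exists_adj_getElem?_one hsz
    obtain ⟨c, hc, hsc⟩ := R.exists_adj_getElem?_one hsz
    rcases hG s a b c hsa hsb hsc with rfl | rfl | rfl
    · exact absurd (hb.trans ha.symm) hQP
    · exact Or.inl (times_eq (hc.trans ha.symm))
    · exact Or.inr (times_eq (hc.trans hb.symm))
  · simp only [not_exists, not_not] at hQ
    exact ⟨P, fun R => Or.inl (times_eq (hQ R))⟩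

end TPath

section SnapshotDuality

variable {G : Multigraph} {lam : G.E → ℕ} {s z : G.V}

theorem isSnapCut_iff {S : Set ℕ} :
    IsSnapCut G lam s z S ↔ ∀ P : TPath G lam s z, (P.times ∩ S).Nonempty := by
  simp [IsSnapCut, TPath.times, Set.Nonempty]

theorem SnapDisjoint.symm {P Q : TPath G lam s z} (h : SnapDisjoint P Q) : SnapDisjoint Q P := by
  rwa [SnapDisjoint, Set.inter_comm]

theorem card_le_of_isSnapCut {k : ℕ} {f : Fin k → TPath G lam s z}
    (hf : Pairwise fun i j => SnapDisjoint (f i) (f j)) {S : Finset ℕ}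
    (hS : IsSnapCut G lam s z S) : k ≤ S.card := by
  choose t ht using fun i => isSnapCut_iff.1 hS (f i)
  have ht_inj : Function.Injective t := fun i j hij => by
    by_contra hne
    exact (hf hne).subset ⟨(ht i).1, hij ▸ (ht j).1⟩
  simpa using Fintype.card_le_of_injective (fun i => (⟨t i, (ht i).2⟩ : S))
    fun i j hij => ht_inj (congrArg Subtype.val hij)

theorem isSnapCut_range (hsz : s ≠ z) :
    IsSnapCut G lam s z (Finset.univ.image lam : Finset ℕ) :=
  isSnapCut_iff.2 fun P =>
    let ⟨t, e, he, het⟩ := P.times_nonempty hsz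
    ⟨t, ⟨e, he, het⟩, by simp [← het]⟩

theorem minC_le {S : Finset ℕ} (hS : IsSnapCut G lam s z S) : minC G lam s z ≤ S.card :=
  Nat.sInf_le ⟨S, rfl, hS⟩

theorem exists_isSnapCut_card_eq_minC (hsz : s ≠ z) :
    ∃ S : Finset ℕ, S.card = minC G lam s z ∧ IsSnapCut G lam s z S :=
  Nat.sInf_mem (s := {h | ∃ S : Finset ℕ, S.card = h ∧ IsSnapCut G lam s z S})
    ⟨_, _, rfl, isSnapCut_range hsz⟩

theorem le_maxD (hsz : s ≠ z) {k : ℕ} (f : Fin k → TPath G lam s z)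
    (hf : Pairwise fun i j => SnapDisjoint (f i) (f j)) : k ≤ maxD G lam s z := by
  have hbdd : BddAbove
      {k | ∃ f : Fin k → TPath G lam s z, ∀ i j, i ≠ j → SnapDisjoint (f i) (f j)} :=
    ⟨_, fun _ ⟨_, hg⟩ => card_le_of_isSnapCut (fun _ _ => hg _ _) (isSnapCut_range hsz)⟩
  exact le_csSup hbdd ⟨f, fun _ _ => @hf _ _⟩

theorem maxD_le_minC (hsz : s ≠ z) : maxD G lam s z ≤ minC G lam s z := by
  obtain ⟨S, hcard, hS⟩ := exists_isSnapCut_card_eq_minC (lam := lam) hsz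
  refine csSup_le ⟨0, Fin.elim0, fun i => i.elim0⟩ fun k ⟨f, hf⟩ => ?_
  exact hcard ▸ card_le_of_isSnapCut (fun _ _ => hf _ _) hS

theorem minC_eq_zero_of_isEmpty [IsEmpty (TPath G lam s z)] : minC G lam s z = 0 :=
  Nat.le_zero.1 (minC_le (S := ∅) fun P => isEmptyElim P)

theorem minC_le_maxD_of_forall_times_eq_or_eq (hsz : s ≠ z) (P Q : TPath G lam s z)
    (h : ∀ R : TPath G lam s z, R.times = P.times ∨ R.times = Q.times) :
    minC G lam s z ≤ maxD G lam s z := by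
  have isSnapCut_of_meets {S : Finset ℕ} (hP : (P.times ∩ S).Nonempty)
      (hQ : (Q.times ∩ S).Nonempty) : IsSnapCut G lam s z S :=
    isSnapCut_iff.2 fun R => by rcases h R with hR | hR <;> rwa [hR]
  by_cases hPQ : SnapDisjoint P Q
  · obtain ⟨t, ht⟩ := P.times_nonempty hsz
    obtain ⟨u, hu⟩ := Q.times_nonempty hsz
    calc minC G lam s z ≤ ({t, u} : Finset ℕ).card :=
          minC_le (isSnapCut_of_meets ⟨t, ht, by simp⟩ ⟨u, hu, by simp⟩)
      _ ≤ 2 := Finset.card_le_two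
      _ ≤ maxD G lam s z := le_maxD hsz ![P, Q] (by
          simp [Pairwise, Fin.forall_fin_two, hPQ, hPQ.symm])
  · obtain ⟨t, htP, htQ⟩ := Set.nonempty_iff_ne_empty.2 hPQ
    calc minC G lam s z ≤ ({t} : Finset ℕ).card :=
          minC_le (isSnapCut_of_meets ⟨t, htP, by simp⟩ ⟨t, htQ, by simp⟩)
      _ = 1 := Finset.card_singleton t
      _ ≤ maxD G lam s z := le_maxD hsz ![P] Subsingleton.pairwise

end SnapshotDuality

/-- every cycle (a multigraph whose underlying simple graph is a cycle and
all of whose multiedges have multiplicity 1) is Mengerian for time. -/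
theorem stmt12 (G : Multigraph) (hmult1 : Function.Injective G.ends)
    (hcycle : ∃ n : ℕ, 3 ≤ n ∧ Nonempty (G.simple ≃g SimpleGraph.cycleGraph n)) :
    Mengerian G := by
  obtain ⟨n, -, ⟨φ⟩⟩ := hcycle
  have hG := (SimpleGraph.maxDegreeLeTwo_cycleGraph n).of_embedding φ.toEmbedding
  intro lam _ s z hsz
  refine le_antisymm (maxD_le_minC hsz) ?_
  rcases isEmpty_or_nonempty (TPath G lam s z) with _ | ⟨⟨P⟩⟩
  · exact minC_eq_zero_of_isEmpty.trans_le (Nat.zero_le _)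
  · obtain ⟨Q, hQ⟩ := P.exists_forall_times_eq_or_eq hmult1 hG hsz
    exact minC_le_maxD_of_forall_times_eq_or_eq hsz P Q hQ
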